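/- Let {C_1,…,C_M} be an (M,L)-CCC, let P be a positive divisor of M, let b^1,…,b^P be unimodular MOSs of length P, and let n_1,…,n_{P+1} be nonnegative integers with sum n. For 0 ≤ ν < M/P and 1 ≤ μ ≤ P define B_{νP+μ} = R(C_{νP+1}, …, C_{(ν+1)P}; b^μ). If t_1 = ν_1 P + μ_1 and t_2 = ν_2 P + μ_2 with distinct block indices ν_1 ≠ ν_2 (0 ≤ ν_1, ν_2 < M/P, 1 ≤ μ_1, μ_2 ≤ P), then C(B_{t_1}, B_{t_2})(τ) = 0 for every integer τ. -/

import Mathlib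

open scoped BigOperators ComplexConjugate

noncomputable section

/-- Zero-extension of a finite complex sequence to an integer-indexed sequence. -/
def zext {L : ℕ} (a : Fin L → ℂ) (i : ℤ) : ℂ :=
  if h : 0 ≤ i ∧ i < (L : ℤ) then a ⟨i.toNat, by omega⟩ else 0

/-- Aperiodic cross-correlation function (ACCF) of two length-`L` complex sequences. -/
def accf {L : ℕ} (a b : Fin L → ℂ) (τ : ℤ) : ℂ :=
  ∑ i : Fin L, zext a ((i : ℤ) + τ) * conj (b i)

/-- Periodic cross-correlation function of two length-`N` complex sequences. -/
def pccf {N : ℕ} (a b : Fin N → ℂ) (τ : ℤ) : ℂ :=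
  accf a b τ + accf a b (τ - (N : ℤ))

/-- ACCF of two `M × L` codes (sum of row-wise ACCFs). -/
def codeACCF {M L : ℕ} (C D : Fin M → Fin L → ℂ) (τ : ℤ) : ℂ :=
  ∑ ν : Fin M, accf (C ν) (D ν) τ

/-- Periodic cross-correlation of two `M × N` codes. -/
def codePCCF {M N : ℕ} (C D : Fin M → Fin N → ℂ) (τ : ℤ) : ℂ :=
  ∑ ν : Fin M, pccf (C ν) (D ν) τ

/-- `C : Fin M → (Fin M → Fin L → ℂ)` is an `(M,L)`-CCC. -/
def IsCCC {M L : ℕ} (C : Fin M → Fin M → Fin L → ℂ) : Prop :=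
  (∀ k₁ k₂ : Fin M, ∀ τ : ℤ, (k₁ ≠ k₂ ∨ τ ≠ 0) → codeACCF (C k₁) (C k₂) τ = 0) ∧
  (∀ k : Fin M, codeACCF (C k) (C k) 0 = (M : ℂ) * (L : ℂ))

/-- Starting column of the `p`-th data block in the construction `R`:
the block `b_{p+1}·C_{p+1}` starts after the zero blocks `n_1, …, n_{p+1}` and the
previous `p` data blocks of width `L`. -/
def Roff {P : ℕ} (L : ℕ) (n : Fin (P + 1) → ℕ) (p : Fin P) : ℕ :=
  (∑ i : Fin (P + 1), if (i : ℕ) ≤ (p : ℕ) then n i else 0) + (p : ℕ) * L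

/-- The construction
`R(C_1,…,C_P; b) = [0^{n_1} ∥ b_1·C_1 ∥ 0^{n_2} ∥ b_2·C_2 ∥ … ∥ 0^{n_P} ∥ b_P·C_P ∥ 0^{n_{P+1}}]`,
an `M × (P·L + n)` matrix.  (The data blocks are pairwise disjoint, so the column `x` entry
is `b_p · (C_p)_{r,j}` if `x = Roff p + j` for (the unique) such `p, j`, and `0` otherwise.) -/
def Rmat {M L P : ℕ} (Cs : Fin P → Fin M → Fin L → ℂ) (b : Fin P → ℂ)
    (n : Fin (P + 1) → ℕ) : Fin M → Fin (P * L + ∑ i, n i) → ℂ :=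
  fun r x => ∑ p : Fin P, ∑ j : Fin L,
    if (x : ℕ) = Roff L n p + (j : ℕ) then b p * Cs p r j else 0

/-- For `t = νP + μ` (0-indexed), the index `νP + p` of the `p`-th constituent code. -/
def blockIdx {M P : ℕ} (hP : P ∣ M) (t : Fin M) (p : Fin P) : Fin M :=
  ⟨(t : ℕ) / P * P + (p : ℕ), by
    obtain ⟨k, rfl⟩ := hP
    have hPpos : 0 < P := p.pos
    have h1 : (t : ℕ) / P < k := Nat.div_lt_of_lt_mul t.isLt
    have h4 : (p : ℕ) < P := p.isLt
    nlinarith [h1, h4]⟩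

/-- Condition (13) of the paper: for `j₁ ≠ j₂`, `π_{j₁}(i₁P+μ) ≠ π_{j₂}(i₂P+μ)`;
equivalently, images of indices with the same residue mod `P` differ. -/
def Cond13 {M P : ℕ} (π : Fin P → Equiv.Perm (Fin M)) : Prop :=
  ∀ j₁ j₂ : Fin P, j₁ ≠ j₂ → ∀ s t : Fin M, (s : ℕ) % P = (t : ℕ) % P →
    π j₁ s ≠ π j₂ t

/-- Condition (14) of the paper: if `π_{j₁}(i₁P+μ₁) = π_{j₂}(i₂P+μ₂)` for `j₁ ≠ j₂`, then
`π_{j₁}(i₁P+μ₁+α) ≠ π_{j₂}(i₂P+μ₂+α)` for every nonzero shift `α` keeping both positions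
inside their blocks. -/
def Cond14 {M P : ℕ} (π : Fin P → Equiv.Perm (Fin M)) : Prop :=
  ∀ j₁ j₂ : Fin P, j₁ ≠ j₂ → ∀ s t : Fin M, π j₁ s = π j₂ t →
    ∀ α : ℤ, α ≠ 0 →
      0 ≤ ((s : ℕ) : ℤ) % (P : ℤ) + α → ((s : ℕ) : ℤ) % (P : ℤ) + α < (P : ℤ) →
      0 ≤ ((t : ℕ) : ℤ) % (P : ℤ) + α → ((t : ℕ) : ℤ) % (P : ℤ) + α < (P : ℤ) →
      ∀ s' t' : Fin M, ((s' : ℕ) : ℤ) = ((s : ℕ) : ℤ) + α → ((t' : ℕ) : ℤ) = ((t : ℕ) : ℤ) + α →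
        π j₁ s' ≠ π j₂ t'


lemma zext_sum {L : ℕ} (a : Fin L → ℂ) (i : ℤ) :
    zext a i = ∑ j : Fin L, if i = (j : ℤ) then a j else 0 := by
  unfold zext
  split
  · next h =>
    rw [Finset.sum_eq_single (⟨i.toNat, by omega⟩ : Fin L)]
    · rw [if_pos]
      simp only [Fin.val_mk]
      omega
    · intro j _ hj
      rw [if_neg]
      intro he
      apply hj
      apply Fin.ext
      simp only [Fin.val_mk]
      omega
    · intro h; exact absurd (Finset.mem_univ _) h
  · next h =>
    symm
    apply Finset.sum_eq_zero
    intro j _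
    rw [if_neg]
    intro he
    have := j.isLt
    apply h
    omega

lemma sum_fin_eq_nat {N : ℕ} (c : ℕ) (hc : c < N) (f : Fin N → ℂ) :
    ∑ x : Fin N, (if (x : ℕ) = c then f x else 0) = f ⟨c, hc⟩ := by
  rw [Finset.sum_eq_single (⟨c, hc⟩ : Fin N)]
  · simp
  · intro x _ hx
    exact if_neg fun h => hx (Fin.ext h)
  · intro h; exact absurd (Finset.mem_univ _) h

lemma roff_add_lt {L P : ℕ} (n : Fin (P + 1) → ℕ) (p : Fin P) (j : Fin L) :
    Roff L n p + (j : ℕ) < P * L + ∑ i, n i := by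
  unfold Roff
  have h1 : (∑ i : Fin (P + 1), if (i : ℕ) ≤ (p : ℕ) then n i else 0) ≤ ∑ i, n i :=
    Finset.sum_le_sum fun i _ => by split <;> simp
  have h2 : (p : ℕ) * L + (j : ℕ) < P * L := by
    have hj := j.isLt
    calc (p : ℕ) * L + (j : ℕ) < (p : ℕ) * L + L := by omega
      _ = ((p : ℕ) + 1) * L := by ring
      _ ≤ P * L := Nat.mul_le_mul_right L p.isLt
  omega

lemma zext_Rmat {M L P : ℕ} (Cs : Fin P → Fin M → Fin L → ℂ) (b : Fin P → ℂ)
    (n : Fin (P + 1) → ℕ) (r : Fin M) (i : ℤ) :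
    zext (Rmat Cs b n r) i =
      ∑ p : Fin P, ∑ j : Fin L,
        if i = ((Roff L n p + (j : ℕ) : ℕ) : ℤ) then b p * Cs p r j else 0 := by
  rw [zext_sum]
  have key : ∀ x : Fin (P * L + ∑ i, n i),
      (if i = (x : ℤ) then Rmat Cs b n r x else 0) =
      ∑ p : Fin P, ∑ j : Fin L,
        if (x : ℕ) = Roff L n p + (j : ℕ) then
          (if i = (x : ℤ) then b p * Cs p r j else 0) else 0 := by
    intro x
    simp only [Rmat]
    split
    · next h =>
      refine Finset.sum_congr rfl fun p _ => Finset.sum_congr rfl fun j _ => ?_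
      split <;> simp [h]
    · next h =>
      symm
      apply Finset.sum_eq_zero; intro p _
      apply Finset.sum_eq_zero; intro j _
      split <;> simp [h]
  rw [Finset.sum_congr rfl fun x _ => key x, Finset.sum_comm]
  refine Finset.sum_congr rfl fun p _ => ?_
  rw [Finset.sum_comm]
  refine Finset.sum_congr rfl fun j _ => ?_
  rw [sum_fin_eq_nat _ (roff_add_lt n p j)]

lemma accf_Rmat {M L P : ℕ} (Cs1 Cs2 : Fin P → Fin M → Fin L → ℂ) (b1 b2 : Fin P → ℂ)
    (n : Fin (P + 1) → ℕ) (r : Fin M) (τ : ℤ) :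
    accf (Rmat Cs1 b1 n r) (Rmat Cs2 b2 n r) τ =
      ∑ p : Fin P, ∑ j : Fin L, ∑ p' : Fin P, ∑ j' : Fin L,
        if ((Roff L n p' + (j' : ℕ) : ℕ) : ℤ) + τ = ((Roff L n p + (j : ℕ) : ℕ) : ℤ)
        then b1 p * Cs1 p r j * conj (b2 p' * Cs2 p' r j') else 0 := by
  unfold accf
  have step1 : ∀ x : Fin (P * L + ∑ i, n i),
      zext (Rmat Cs1 b1 n r) ((x : ℤ) + τ) * conj (Rmat Cs2 b2 n r x) =
      ∑ p : Fin P, ∑ j : Fin L, ∑ p' : Fin P, ∑ j' : Fin L,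
        if (x : ℕ) = Roff L n p' + (j' : ℕ) then
          (if (x : ℤ) + τ = ((Roff L n p + (j : ℕ) : ℕ) : ℤ) then
            b1 p * Cs1 p r j * conj (b2 p' * Cs2 p' r j') else 0) else 0 := by
    intro x
    rw [zext_Rmat]
    simp only [Rmat]
    rw [Finset.sum_mul]
    refine Finset.sum_congr rfl fun p _ => ?_
    rw [Finset.sum_mul]
    refine Finset.sum_congr rfl fun j _ => ?_
    rw [map_sum, Finset.mul_sum]
    refine Finset.sum_congr rfl fun p' _ => ?_
    rw [map_sum, Finset.mul_sum]
    refine Finset.sum_congr rfl fun j' _ => ?_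
    rw [apply_ite conj, map_zero, ite_zero_mul_ite_zero]
    split_ifs <;> tauto
  rw [Finset.sum_congr rfl fun x _ => step1 x, Finset.sum_comm]
  refine Finset.sum_congr rfl fun p _ => ?_
  rw [Finset.sum_comm]
  refine Finset.sum_congr rfl fun j _ => ?_
  rw [Finset.sum_comm]
  refine Finset.sum_congr rfl fun p' _ => ?_
  rw [Finset.sum_comm]
  refine Finset.sum_congr rfl fun j' _ => ?_
  rw [sum_fin_eq_nat _ (roff_add_lt n p' j')]

/-- In the construction of Theorem 1, two constructed codes coming from
distinct block indices `ν₁ ≠ ν₂` (0-indexed: `t₁/P ≠ t₂/P`) have vanishing ACCF at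
every shift `τ`. -/
theorem snc_ccc_accf_distinct_blocks {M L P : ℕ} (hPpos : 0 < P) (hP : P ∣ M)
    (C : Fin M → Fin M → Fin L → ℂ) (hC : IsCCC C)
    (bs : Fin P → Fin P → ℂ)
    (hMOS : ∀ μ₁ μ₂ : Fin P, μ₁ ≠ μ₂ → ∑ i : Fin P, bs μ₁ i * conj (bs μ₂ i) = 0)
    (hUni : ∀ μ i : Fin P, ‖bs μ i‖ = 1)
    (n : Fin (P + 1) → ℕ)
    (Bc : Fin M → Fin M → Fin (P * L + ∑ i, n i) → ℂ)
    (hB : ∀ t : Fin M,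
      Bc t = Rmat (fun p => C (blockIdx hP t p)) (bs ⟨(t : ℕ) % P, Nat.mod_lt _ hPpos⟩) n) :
    ∀ t₁ t₂ : Fin M, (t₁ : ℕ) / P ≠ (t₂ : ℕ) / P →
      ∀ τ : ℤ, codeACCF (Bc t₁) (Bc t₂) τ = 0 := by
  intro t₁ t₂ hne τ
  have e1 : ∀ a q : ℕ, q < P → (a * P + q) / P = a := by
    intro a q hq
    rw [Nat.mul_comm, Nat.add_comm, Nat.add_mul_div_left _ _ hPpos,
      Nat.div_eq_of_lt hq, Nat.zero_add]
  unfold codeACCF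
  simp only [hB]
  rw [Finset.sum_congr rfl fun r _ => accf_Rmat (fun p => C (blockIdx hP t₁ p))
    (fun p => C (blockIdx hP t₂ p)) (bs ⟨(t₁ : ℕ) % P, Nat.mod_lt _ hPpos⟩)
    (bs ⟨(t₂ : ℕ) % P, Nat.mod_lt _ hPpos⟩) n r τ]
  -- now ∑ r ∑ p ∑ j ∑ p' ∑ j' ...
  rw [Finset.sum_comm]
  apply Finset.sum_eq_zero; intro p _
  rw [Finset.sum_congr rfl fun r _ => Finset.sum_comm]
  rw [Finset.sum_comm]
  apply Finset.sum_eq_zero; intro p' _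
  have hk : blockIdx hP t₁ p ≠ blockIdx hP t₂ p' := by
    intro hco
    have h := congrArg Fin.val hco
    simp only [blockIdx] at h
    exact hne (by rw [← e1 ((t₁ : ℕ) / P) p p.isLt, h, e1 _ _ p'.isLt])
  have h0 := hC.1 _ _ (((Roff L n p' : ℕ) : ℤ) + τ - ((Roff L n p : ℕ) : ℤ)) (Or.inl hk)
  trans ((bs ⟨(t₁ : ℕ) % P, Nat.mod_lt _ hPpos⟩ p * conj (bs ⟨(t₂ : ℕ) % P, Nat.mod_lt _ hPpos⟩ p')) *
        codeACCF (C (blockIdx hP t₁ p)) (C (blockIdx hP t₂ p'))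
          (((Roff L n p' : ℕ) : ℤ) + τ - ((Roff L n p : ℕ) : ℤ)))
  swap
  · rw [h0, mul_zero]
  unfold codeACCF accf
  rw [Finset.mul_sum]
  refine Finset.sum_congr rfl fun r _ => ?_
  rw [Finset.sum_comm, Finset.mul_sum]
  refine Finset.sum_congr rfl fun j' _ => ?_
  rw [zext_sum, Finset.sum_mul, Finset.mul_sum]
  refine Finset.sum_congr rfl fun j _ => ?_
  rw [map_mul, ite_mul, zero_mul, mul_ite, mul_zero]
  by_cases hcd : ((Roff L n p' + (j' : ℕ) : ℕ) : ℤ) + τ = ((Roff L n p + (j : ℕ) : ℕ) : ℤ)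
  · rw [if_pos hcd, if_pos (by push_cast at hcd ⊢; omega)]
    ring
  · rw [if_neg hcd, if_neg fun hx => hcd (by push_cast at hx ⊢; omega)]

end
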